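/- Let N, γ ∈ [0,∞), L, τ ∈ (0,∞), M ∈ ℝ, and 0 < β₁ ≤ β₂. Let f : ℝ → ℂ be measurable and suppose there exist C₀ ≥ 0 and q ≥ 1 + (N+2)/τ such that |f(x)| ≤ C₀·(1+|x|)^{−q} for all x ∈ ℝ. Then, with C := 2^{4+N+τ+τq}, the sum over all k ∈ ℤ with k + M ≥ 0 of |γ·(k+M)|^N · (∫ from β₁·(k+M)−L to β₂·(k+M)+L of |f(x)| dx)^τ is at most C·(β₂/β₁)^τ·(γ/β₁)^N·C₀^τ·(1 + L^{τ+N})·(1 + (L+1)/β₁). -/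

import Mathlib

/-!
Write `t = k + M ≥ 0`, `u = β₁ t` and `v = 1 + (u - L)⁺`, so that `1 + |x| ≥ v` on the interval of
integration. The integral is then at most `C₀ (β₂/β₁) (u + 2L) v^(-q)`, and since
`u + 2L ≤ 4 max(1, L) v` and `qτ ≥ N + τ + 2`, each summand is at most a constant times
`v^(-2) ≤ 4 ((L+1)/(L+1+u))²`. The admissible `t` are `⌈-M⌉ + M + n` with `n ∈ ℕ`, and the sum of
`((L+1)/(L+1+β₁t))²` over them telescopes against `1/(L+1+β₁t)` to at most `1 + (L+1)/β₁`.
-/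

open Real Set MeasureTheory
open scoped ENNReal

theorem max_one_rpow_le_one_add_rpow {L : ℝ} (hL : 0 ≤ L) (s : ℝ) :
    max 1 L ^ s ≤ 1 + L ^ s := by
  rcases max_cases 1 L with ⟨h, -⟩ | ⟨h, -⟩ <;> rw [h]
  · simp [rpow_nonneg hL s]
  · linarith

theorem rpow_mul_rpow_mul_one_add_max_rpow_neg_le {u L N τ p : ℝ} (hu : 0 ≤ u) (hL : 0 ≤ L)
    (hN : 0 ≤ N) (hτ : 0 ≤ τ) (hp : N + τ + 2 ≤ p) :
    u ^ N * (u + 2 * L) ^ τ * (1 + max (u - L) 0) ^ (-p) ≤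
      4 ^ (N + τ + 1) * (1 + L ^ (N + τ)) * ((L + 1) / (L + 1 + u)) ^ 2 := by
  set v := 1 + max (u - L) 0
  have hv1 : 1 ≤ v := by simp [v]
  have hv2 : u - L + 1 ≤ v := by linarith [le_max_left (u - L) 0]
  have hw : 1 ≤ max 1 L ∧ L ≤ max 1 L := ⟨le_max_left _ _, le_max_right _ _⟩
  have hle : u + 2 * L ≤ 4 * max 1 L * v := by nlinarith
  have hpoly : u ^ N * (u + 2 * L) ^ τ ≤ 4 ^ (N + τ) * max 1 L ^ (N + τ) * v ^ (N + τ) := by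
    calc u ^ N * (u + 2 * L) ^ τ ≤ (4 * max 1 L * v) ^ N * (4 * max 1 L * v) ^ τ := by
          gcongr; linarith
      _ = 4 ^ (N + τ) * max 1 L ^ (N + τ) * v ^ (N + τ) := by
          rw [← rpow_add (by positivity), mul_rpow (by positivity) (by positivity),
            mul_rpow (by positivity) (by positivity)]
  have hdecay : v ^ (N + τ) * v ^ (-p) ≤ (v ^ 2)⁻¹ := by
    rw [← rpow_add (by positivity), ← rpow_natCast, ← rpow_neg (by positivity)]
    exact rpow_le_rpow_of_exponent_le hv1 (by push_cast; linarith)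
  have hv : (v ^ 2)⁻¹ ≤ 4 * ((L + 1) / (L + 1 + u)) ^ 2 := by
    have : 1 / v ≤ 2 * (L + 1) / (L + 1 + u) := by
      rw [div_le_div_iff₀ (by positivity) (by positivity)]
      nlinarith
    calc (v ^ 2)⁻¹ = (1 / v) ^ 2 := by rw [one_div, inv_pow]
      _ ≤ (2 * (L + 1) / (L + 1 + u)) ^ 2 := by gcongr
      _ = 4 * ((L + 1) / (L + 1 + u)) ^ 2 := by ring
  calc u ^ N * (u + 2 * L) ^ τ * v ^ (-p)
      ≤ 4 ^ (N + τ) * max 1 L ^ (N + τ) * (v ^ (N + τ) * v ^ (-p)) := by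
        rw [← mul_assoc]; gcongr
    _ ≤ 4 ^ (N + τ) * (1 + L ^ (N + τ)) * (4 * ((L + 1) / (L + 1 + u)) ^ 2) := by
        gcongr 4 ^ (N + τ) * ?_ * ?_
        · exact max_one_rpow_le_one_add_rpow hL _
        · exact hdecay.trans hv
    _ = 4 ^ (N + τ + 1) * (1 + L ^ (N + τ)) * ((L + 1) / (L + 1 + u)) ^ 2 := by
        rw [rpow_add_one (by norm_num)]; ring

theorem setIntegral_Icc_norm_le_of_decay {E : Type*} [NormedAddCommGroup E] {f : ℝ → E}
    {C₀ q a b : ℝ} (hC₀ : 0 ≤ C₀) (hq : 0 ≤ q) (hab : a ≤ b)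
    (hbound : ∀ x, ‖f x‖ ≤ C₀ * (1 + |x|) ^ (-q)) :
    ∫ x in Icc a b, ‖f x‖ ≤ C₀ * (b - a) * (1 + max a 0) ^ (-q) := by
  have hle : ∀ x ∈ Icc a b, ‖‖f x‖‖ ≤ C₀ * (1 + max a 0) ^ (-q) := fun x hx => by
    rw [norm_norm]
    refine (hbound x).trans (mul_le_mul_of_nonneg_left ?_ hC₀)
    have : max a 0 ≤ |x| := max_le (hx.1.trans (le_abs_self x)) (abs_nonneg x)
    exact rpow_le_rpow_of_nonpos (by positivity) (by linarith) (neg_nonpos.2 hq)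
  calc ∫ x in Icc a b, ‖f x‖ ≤ ‖∫ x in Icc a b, ‖f x‖‖ := le_abs_self _
    _ ≤ C₀ * (1 + max a 0) ^ (-q) * volume.real (Icc a b) :=
      norm_setIntegral_le_of_norm_le_const measure_Icc_lt_top hle
    _ = C₀ * (b - a) * (1 + max a 0) ^ (-q) := by rw [volume_real_Icc_of_le hab]; ring

theorem abs_mul_rpow_mul_setIntegral_rpow_le {E : Type*} [NormedAddCommGroup E] {f : ℝ → E}
    {N γ L τ β₁ β₂ C₀ q t : ℝ} (hN : 0 ≤ N) (hγ : 0 ≤ γ) (hL : 0 ≤ L) (hτ : 0 ≤ τ)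
    (hβ₁ : 0 < β₁) (hβ₁₂ : β₁ ≤ β₂) (hC₀ : 0 ≤ C₀) (hq : N + τ + 2 ≤ q * τ)
    (hbound : ∀ x, ‖f x‖ ≤ C₀ * (1 + |x|) ^ (-q)) (ht : 0 ≤ t) :
    |γ * t| ^ N * (∫ x in Icc (β₁ * t - L) (β₂ * t + L), ‖f x‖) ^ τ ≤
      (β₂ / β₁) ^ τ * (γ / β₁) ^ N * C₀ ^ τ * (4 ^ (N + τ + 1) * (1 + L ^ (N + τ))) *
        ((L + 1) / (L + 1 + β₁ * t)) ^ 2 := by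
  have hq0 : 0 ≤ q := by nlinarith
  have hβ₂ : 0 < β₂ := hβ₁.trans_le hβ₁₂
  set u := β₁ * t with hu
  have hu0 : 0 ≤ u := by positivity
  have hI : ∫ x in Icc (u - L) (β₂ * t + L), ‖f x‖ ≤
      C₀ * (β₂ / β₁) * ((u + 2 * L) * (1 + max (u - L) 0) ^ (-q)) := by
    refine (setIntegral_Icc_norm_le_of_decay hC₀ hq0 (by nlinarith) hbound).trans ?_
    have hlen : β₂ * t + L - (u - L) ≤ β₂ / β₁ * (u + 2 * L) := by
      have : β₂ / β₁ * u = β₂ * t := by rw [hu]; field_simp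
      nlinarith [(one_le_div hβ₁).2 hβ₁₂]
    calc C₀ * (β₂ * t + L - (u - L)) * (1 + max (u - L) 0) ^ (-q)
        ≤ C₀ * (β₂ / β₁ * (u + 2 * L)) * (1 + max (u - L) 0) ^ (-q) := by gcongr
      _ = _ := by ring
  have hγt : |γ * t| = γ / β₁ * u := by
    rw [abs_of_nonneg (by positivity), hu]; field_simp
  clear_value u
  calc |γ * t| ^ N * (∫ x in Icc (u - L) (β₂ * t + L), ‖f x‖) ^ τ
      ≤ (γ / β₁ * u) ^ N * (C₀ * (β₂ / β₁) * ((u + 2 * L) * (1 + max (u - L) 0) ^ (-q))) ^ τ := by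
        rw [hγt]; gcongr
    _ = (β₂ / β₁) ^ τ * (γ / β₁) ^ N * C₀ ^ τ *
          (u ^ N * (u + 2 * L) ^ τ * (1 + max (u - L) 0) ^ (-(q * τ))) := by
        rw [mul_rpow (by positivity) hu0, mul_rpow (by positivity) (by positivity),
          mul_rpow hC₀ (by positivity), mul_rpow (by positivity) (by positivity),
          neg_mul_eq_neg_mul, rpow_mul (by positivity)]
        ring
    _ ≤ (β₂ / β₁) ^ τ * (γ / β₁) ^ N * C₀ ^ τ *
          (4 ^ (N + τ + 1) * (1 + L ^ (N + τ)) * ((L + 1) / (L + 1 + u)) ^ 2) := by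
        gcongr (β₂ / β₁) ^ τ * (γ / β₁) ^ N * C₀ ^ τ * ?_
        exact rpow_mul_rpow_mul_one_add_max_rpow_neg_le hu0 hL hN hτ hq
    _ = _ := by ring

theorem sum_range_div_add_mul_sq_le {a b δ c : ℝ} (ha : 0 < a) (hb : 0 < b) (hδ : 0 ≤ δ)
    (hc : 0 ≤ c) (n : ℕ) :
    ∑ i ∈ Finset.range n, c * (a / (a + b * (δ + i))) ^ 2 ≤ c * (1 + a / b) := by
  rw [← Finset.mul_sum]
  gcongr
  set x : ℕ → ℝ := fun i => a + b * (δ + i) with hx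
  have hxa : ∀ i, a ≤ x i := fun i => le_add_of_nonneg_right (by positivity)
  have hx0 : ∀ i, 0 < x i := fun i => ha.trans_le (hxa i)
  -- each later term is dominated by the increment of `i ↦ -a² / (b x i)`
  have hstep : ∀ i : ℕ, (a / x (i + 1)) ^ 2 ≤ a ^ 2 / b * (1 / x i - 1 / x (i + 1)) := by
    intro i
    have hxs : x (i + 1) = x i + b := by simp only [hx]; push_cast; ring
    have := hx0 i
    rw [hxs, div_pow, div_le_iff₀ (by positivity)]
    field_simp
    nlinarith
  cases n with
  | zero => simp only [Finset.range_zero, Finset.sum_empty]; positivity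
  | succ m =>
    rw [Finset.sum_range_succ']
    have h0 : (a / x 0) ^ 2 ≤ 1 := pow_le_one₀ (by positivity) ((div_le_one (hx0 0)).2 (hxa 0))
    have htel : a ^ 2 / b * (1 / x 0 - 1 / x m) ≤ a / b := by
      have : 1 / x 0 - 1 / x m ≤ 1 / a := by
        have := one_div_le_one_div_of_le ha (hxa 0)
        have := one_div_pos.2 (hx0 m)
        linarith
      calc a ^ 2 / b * (1 / x 0 - 1 / x m) ≤ a ^ 2 / b * (1 / a) := by gcongr
        _ = a / b := by field_simp
    calc ∑ i ∈ Finset.range m, (a / x (i + 1)) ^ 2 + (a / x 0) ^ 2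
        ≤ ∑ i ∈ Finset.range m, a ^ 2 / b * (1 / x i - 1 / x (i + 1)) + 1 := by
          gcongr with i; exact hstep i
      _ = a ^ 2 / b * (1 / x 0 - 1 / x m) + 1 := by
          rw [← Finset.mul_sum, Finset.sum_range_sub' (fun i => 1 / x i)]
      _ ≤ 1 + a / b := by linarith

theorem tsum_ofReal_mul_div_add_mul_sq_le {a b δ c : ℝ} (ha : 0 < a) (hb : 0 < b) (hδ : 0 ≤ δ)
    (hc : 0 ≤ c) :
    ∑' n : ℕ, ENNReal.ofReal (c * (a / (a + b * (δ + n))) ^ 2) ≤ ENNReal.ofReal (c * (1 + a / b)) :=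
  ENNReal.tsum_le_of_sum_range_le fun n => by
    rw [← ENNReal.ofReal_sum_of_nonneg fun i _ => by positivity]
    exact ENNReal.ofReal_le_ofReal (sum_range_div_add_mul_sq_le ha hb hδ hc n)

theorem tsum_subtype_int_add_le (M : ℝ) (F : ℝ → ℝ≥0∞) :
    ∑' k : {k : ℤ // 0 ≤ (k : ℝ) + M}, F (k + M) ≤ ∑' n : ℕ, F (⌈-M⌉ + M + n) := by
  have hk : ∀ k : {k : ℤ // 0 ≤ (k : ℝ) + M}, ⌈-M⌉ ≤ k.1 :=
    fun k => Int.ceil_le.2 (by linarith [k.2])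
  have hinj : Function.Injective fun k : {k : ℤ // 0 ≤ (k : ℝ) + M} => (k.1 - ⌈-M⌉).toNat := by
    intro k l hkl
    have := hk k
    have := hk l
    ext; simp only at hkl; omega
  refine le_of_eq_of_le (tsum_congr fun k => ?_) (ENNReal.tsum_comp_le_tsum_of_injective hinj _)
  have := hk k
  congr 1
  rw [← Int.cast_natCast, Int.toNat_of_nonneg (by omega)]
  push_cast; ring

theorem main_summation_lemma_general (N γ : ℝ) (hN : 0 ≤ N) (hγ : 0 ≤ γ)
    (L τ : ℝ) (hL : 0 < L) (hτ : 0 < τ) (M : ℝ)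
    (β₁ β₂ : ℝ) (hβ₁ : 0 < β₁) (hβ₁₂ : β₁ ≤ β₂)
    (f : ℝ → ℂ) (C₀ q : ℝ) (hC₀ : 0 ≤ C₀)
    (hq : 1 + (N + 2) / τ ≤ q) (hbound : ∀ x : ℝ, ‖f x‖ ≤ C₀ * (1 + |x|) ^ (-q)) :
    (∑' k : {k : ℤ // 0 ≤ (k:ℝ) + M},
        ENNReal.ofReal (|γ * ((k.1:ℝ) + M)| ^ N *
          (∫ x in Set.Icc (β₁ * ((k.1:ℝ) + M) - L) (β₂ * ((k.1:ℝ) + M) + L), ‖f x‖) ^ τ))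
      ≤ ENNReal.ofReal ((2:ℝ) ^ (4 + N + τ + τ * q) * (β₂ / β₁) ^ τ * (γ / β₁) ^ N *
          C₀ ^ τ * (1 + L ^ (τ + N)) * (1 + (L + 1) / β₁)) := by
  have hqτ : N + τ + 2 ≤ q * τ := by
    have := mul_le_mul_of_nonneg_right hq hτ.le
    rw [add_mul, div_mul_cancel₀ _ hτ.ne'] at this
    linarith
  have hδ : 0 ≤ (⌈-M⌉ : ℝ) + M := by linarith [Int.le_ceil (-M)]
  have h4 : (4 : ℝ) ^ (N + τ + 1) ≤ 2 ^ (4 + N + τ + τ * q) := by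
    rw [show (4 : ℝ) = 2 ^ (2 : ℝ) by norm_num, ← rpow_mul (by norm_num)]
    exact rpow_le_rpow_of_exponent_le one_le_two (by linarith)
  set K := (β₂ / β₁) ^ τ * (γ / β₁) ^ N * C₀ ^ τ
  have hK : 0 ≤ K := by have := hβ₁.trans_le hβ₁₂; positivity
  calc _ ≤ ∑' n : ℕ, ENNReal.ofReal (K * (4 ^ (N + τ + 1) * (1 + L ^ (N + τ))) *
          ((L + 1) / (L + 1 + β₁ * (⌈-M⌉ + M + n))) ^ 2) :=
        (tsum_subtype_int_add_le M fun t => ENNReal.ofReal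
            (|γ * t| ^ N * (∫ x in Icc (β₁ * t - L) (β₂ * t + L), ‖f x‖) ^ τ)).trans <|
          ENNReal.tsum_le_tsum fun n => ENNReal.ofReal_le_ofReal <|
            abs_mul_rpow_mul_setIntegral_rpow_le hN hγ hL.le hτ.le hβ₁ hβ₁₂ hC₀ hqτ hbound
              (by positivity)
    _ ≤ ENNReal.ofReal (K * (4 ^ (N + τ + 1) * (1 + L ^ (N + τ))) * (1 + (L + 1) / β₁)) :=
        tsum_ofReal_mul_div_add_mul_sq_le (by positivity) hβ₁ hδ (by positivity)
    _ ≤ _ := by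
        refine ENNReal.ofReal_le_ofReal ?_
        rw [add_comm τ N]
        calc K * (4 ^ (N + τ + 1) * (1 + L ^ (N + τ))) * (1 + (L + 1) / β₁)
            = 4 ^ (N + τ + 1) * (K * (1 + L ^ (N + τ)) * (1 + (L + 1) / β₁)) := by ring
          _ ≤ 2 ^ (4 + N + τ + τ * q) * (K * (1 + L ^ (N + τ)) * (1 + (L + 1) / β₁)) := by gcongr
          _ = _ := by ring

/-- Let `N, γ ∈ [0,∞)`, `L, τ ∈ (0,∞)`, `M ∈ ℝ`, `0 < β₁ ≤ β₂`, and let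
`f : ℝ → ℂ` be measurable with `|f(x)| ≤ C₀·(1+|x|)^{−q}` for all `x`, where `C₀ ≥ 0` and
`q ≥ 1 + (N+2)/τ`. Then, with `C = 2^{4+N+τ+τq}`,
`∑_{k∈ℤ, k+M≥0} |γ(k+M)|^N (∫_{β₁(k+M)−L}^{β₂(k+M)+L} |f(x)| dx)^τ
  ≤ C·(β₂/β₁)^τ·(γ/β₁)^N·C₀^τ·(1 + L^{τ+N})·(1 + (L+1)/β₁)`. -/
theorem main_summation_lemma (N γ : ℝ) (hN : 0 ≤ N) (hγ : 0 ≤ γ)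
    (L τ : ℝ) (hL : 0 < L) (hτ : 0 < τ) (M : ℝ)
    (β₁ β₂ : ℝ) (hβ₁ : 0 < β₁) (hβ₁₂ : β₁ ≤ β₂)
    (f : ℝ → ℂ) (hf : Measurable f) (C₀ q : ℝ) (hC₀ : 0 ≤ C₀)
    (hq : 1 + (N + 2) / τ ≤ q) (hbound : ∀ x : ℝ, ‖f x‖ ≤ C₀ * (1 + |x|) ^ (-q)) :
    (∑' k : {k : ℤ // 0 ≤ (k:ℝ) + M},
        ENNReal.ofReal (|γ * ((k.1:ℝ) + M)| ^ N *
          (∫ x in Set.Icc (β₁ * ((k.1:ℝ) + M) - L) (β₂ * ((k.1:ℝ) + M) + L), ‖f x‖) ^ τ))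
      ≤ ENNReal.ofReal ((2:ℝ) ^ (4 + N + τ + τ * q) * (β₂ / β₁) ^ τ * (γ / β₁) ^ N *
          C₀ ^ τ * (1 + L ^ (τ + N)) * (1 + (L + 1) / β₁)) :=
  main_summation_lemma_general N γ hN hγ L τ hL hτ M β₁ β₂ hβ₁ hβ₁₂ f C₀ q hC₀ hq hbound
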